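/- Let n,k ≥ 1, let m = (m_1,…,m_k) be an array of nonnegative integers, and let τ be a permutation of {1,…,k−1}. Set m' = (m_{τ(1)},…,m_{τ(k−1)},m_k). Then there exists a bijection from A_n^k(m) to A_n^k(m'), a ↦ b, such that DES(a) = DES(b), DEZ(a) = DEZ(b), and Der(a) = Der(b). -/

import Mathlib

open scoped Classical

namespace KArr

/-- Positive reduction of a word over ℤ: each positive letter is replaced by its
rank among the distinct positive letters of the word; negative letters unchanged. -/
def posReduce (w : List ℤ) : List ℤ :=
  w.map fun x => if 0 < x then ((w.toFinset.filter fun y => 0 < y ∧ y ≤ x).card : ℤ) else x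

/-- The set of descents of a word (1-indexed: `i` is a descent iff `w_i > w_{i+1}`). -/
def desSet (w : List ℤ) : Finset ℕ :=
  (Finset.range w.length).filter fun i => 1 ≤ i ∧ w.getD i 0 < w.getD (i - 1) 0

/-- The number of descents of a word. -/
def desNum (w : List ℤ) : ℕ := (desSet w).card

/-- The subword of positive letters. -/
def posPart (w : List ℤ) : List ℤ := w.filter fun x => decide (0 < x)

/-- A `k`-arrangement of `[n]`: a permutation together with a color in `Fin k`
attached to each fixed point (encoded as a total coloring that is `0` off the
fixed points). -/
abbrev Arrangement (n k : ℕ) :=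
  {x : Equiv.Perm (Fin n) × (Fin n → Fin k) // ∀ j, x.1 j ≠ j → (x.2 j : ℕ) = 0}

/-- The derangement form of a `k`-arrangement: replace each fixed point by the
negative letter recording its color, then positively reduce.  (Color `c : Fin k`
encodes the letter `¬(c+1) = -(c+1)`.) -/
def dfWord {n k : ℕ} (a : Arrangement n k) : List ℤ :=
  posReduce <| (List.finRange n).map fun i =>
    if a.1.1 i = i then -(((a.1.2 i : ℕ) : ℤ) + 1) else ((a.1.1 i : ℕ) : ℤ) + 1

/-- The permutation form of a `k`-arrangement: replace each fixed point whose
color is not `¬k` by the corresponding negative letter, then positively reduce. -/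
def pfWord {n k : ℕ} (a : Arrangement n k) : List ℤ :=
  posReduce <| (List.finRange n).map fun i =>
    if a.1.1 i = i ∧ (a.1.2 i : ℕ) + 1 ≠ k then -(((a.1.2 i : ℕ) : ℤ) + 1)
    else ((a.1.1 i : ℕ) : ℤ) + 1

/-- `fix_i(a)`: the number of fixed points of the base permutation with color `c`. -/
noncomputable def fixCount {n k : ℕ} (a : Arrangement n k) (c : Fin k) : ℕ :=
  Nat.card {i : Fin n // a.1.1 i = i ∧ a.1.2 i = c}

/-- `DEZ(a)`, the descent set of the derangement form. -/
def DEZset {n k : ℕ} (a : Arrangement n k) : Finset ℕ := desSet (dfWord a)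

/-- `DES(a)`, the descent set of the permutation form. -/
def DESset {n k : ℕ} (a : Arrangement n k) : Finset ℕ := desSet (pfWord a)

/-- `dez(a)`, the number of descents of the derangement form. -/
def dez {n k : ℕ} (a : Arrangement n k) : ℕ := desNum (dfWord a)

/-- `des(a)`, the number of descents of the permutation form. -/
def des {n k : ℕ} (a : Arrangement n k) : ℕ := desNum (pfWord a)

/-- `Der(a)`, the derangement part: the positive subword of the derangement form. -/
def Der {n k : ℕ} (a : Arrangement n k) : List ℤ := posPart (dfWord a)

/-- One-line notation of a permutation of `[n]`, as a word over `ℤ` with letters `1,…,n`. -/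
def oneLine {n : ℕ} (π : Equiv.Perm (Fin n)) : List ℤ :=
  (List.finRange n).map fun i => ((π i : ℕ) : ℤ) + 1

/-- A word `w` contains the pattern `p` if some subsequence of `w` of the same
length as `p` is order-isomorphic to `p` (entrywise strict inequalities match). -/
def Contains (w p : List ℤ) : Prop :=
  ∃ s : List ℤ, s.Sublist w ∧ s.length = p.length ∧
    ∀ i j, i < p.length → j < p.length →
      (s.getD i 0 < s.getD j 0 ↔ p.getD i 0 < p.getD j 0)

/-- A word avoids a pattern if it does not contain it. -/
def Avoids (w p : List ℤ) : Prop := ¬ Contains w p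


/-- `dez`-word of a permutation: replace each fixed point by `¬1 = -1`,
then positively reduce (the `1`-arrangement derangement form). -/
def dzWordPerm {n : ℕ} (π : Equiv.Perm (Fin n)) : List ℤ :=
  posReduce <| (List.finRange n).map fun i =>
    if π i = i then (-1 : ℤ) else ((π i : ℕ) : ℤ) + 1

/-- The weak derangement part `Der_k(a)`: the derangement form with all letters `¬k` removed. -/
def wDer {n k : ℕ} (a : Arrangement n k) : List ℤ :=
  (dfWord a).filter fun x => decide (x ≠ -(k : ℤ))

/-- For a word `w` which is a derangement form, position `j` (0-indexed) of `w` is an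
excedance of the base permutation iff the letter is positive and exceeds the number
of positive letters among the first `j+1` letters. -/
def isExcAt (w : List ℤ) (j : ℕ) : Prop :=
  ((((w.take (j + 1)).filter fun x => decide (0 < x)).length : ℤ)) < w.getD j 0

/-- `e_i = E` for the (1-indexed) letter positions `0 ≤ i ≤ m+1` of `w`, with the
boundary conventions `e_0 = e_{m+1} = E`. -/
def slotE (w : List ℤ) (i : ℕ) : Prop :=
  i = 0 ∨ i = w.length + 1 ∨ isExcAt w (i - 1)

/-- `w_i > w_{i+1}` (1-indexed letters) with the conventions `w_0 = w_{m+1} = +∞`;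
this is the descent condition attached to slot `i`, `0 ≤ i ≤ m`. -/
def slotGt (w : List ℤ) (i : ℕ) : Prop :=
  i = 0 ∨ (i < w.length ∧ w.getD i 0 < w.getD (i - 1) 0)

/-- Slot `i` is of type I: `w_i > w_{i+1}` and `(e_i, e_{i+1}) = (E, N)`. -/
def typeI (w : List ℤ) (i : ℕ) : Prop := slotGt w i ∧ slotE w i ∧ ¬ slotE w (i + 1)

/-- Slot `i` is of type II: `w_i ≤ w_{i+1}` and `(e_i, e_{i+1}) = (N, E)`. -/
def typeII (w : List ℤ) (i : ℕ) : Prop := ¬ slotGt w i ∧ ¬ slotE w i ∧ slotE w (i + 1)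

/-- Slot `i` is of type III: `w_i ≤ w_{i+1}` and `(e_i, e_{i+1}) ≠ (N, E)`. -/
def typeIII (w : List ℤ) (i : ℕ) : Prop := ¬ slotGt w i ∧ ¬ (¬ slotE w i ∧ slotE w (i + 1))

/-- Slot `i` is of type IV: `w_i > w_{i+1}` and `(e_i, e_{i+1}) ≠ (E, N)`. -/
def typeIV (w : List ℤ) (i : ℕ) : Prop := slotGt w i ∧ ¬ (slotE w i ∧ ¬ slotE w (i + 1))

/-- The length `s_i` of the `i`-th slot of the word `u` (a derangement form),
where the slot letters are the letters equal to `c` (`= ¬k`). -/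
def slotLen (u : List ℤ) (c : ℤ) (i : ℕ) : ℕ :=
  let L := (List.range u.length).filter fun j => decide (u.getD j 0 ≠ c)
  (if i < L.length then L.getD i 0 else u.length) - (if i = 0 then 0 else L.getD (i - 1) 0 + 1)

/-- The number of peaks of a word: indices `i` (1-indexed, `2 ≤ i ≤ n-1`)
with `w_{i-1} < w_i > w_{i+1}`. -/
def peakNum (w : List ℤ) : ℕ :=
  ((List.range w.length).filter fun i => decide (0 < i ∧ i + 1 < w.length ∧
    w.getD (i - 1) 0 < w.getD i 0 ∧ w.getD (i + 1) 0 < w.getD i 0)).length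

/-- Number of fixed points of a permutation. -/
noncomputable def fixNum {n : ℕ} (π : Equiv.Perm (Fin n)) : ℕ :=
  Nat.card {i : Fin n // π i = i}

/-- Number of excedances of a permutation. -/
noncomputable def excNum {n : ℕ} (π : Equiv.Perm (Fin n)) : ℕ :=
  Nat.card {i : Fin n // i < π i}

/-- Number of anti-excedances of a permutation. -/
noncomputable def aexcNum {n : ℕ} (π : Equiv.Perm (Fin n)) : ℕ :=
  Nat.card {i : Fin n // π i < i}

/-- `ldes` of a word: the smallest `i` which is a descent or equals the length
(0 for the empty word). -/
def ldesW (w : List ℤ) : ℕ :=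
  (((List.range (w.length + 1)).filter fun i =>
    decide ((1 ≤ i ∧ i < w.length ∧ w.getD i 0 < w.getD (i - 1) 0) ∨ i = w.length))).headD 0

/-- `rdes` of a word: the length minus the position of the rightmost descent
(`sSup ∅ = 0` when there is no descent). -/
def rdesW (w : List ℤ) : ℕ :=
  w.length - ((List.range w.length).filter fun i =>
    decide (1 ≤ i ∧ w.getD i 0 < w.getD (i - 1) 0)).foldr max 0

/-- Number of crossing descents of a permutation: (1-indexed) descents `i` with
`σ(i) ≥ i+1 ≥ σ(i+1)`. -/
def xdesW (w : List ℤ) : ℕ :=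
  ((List.range w.length).filter fun i : ℕ =>
    decide (1 ≤ i ∧ (i : ℤ) + 1 ≤ w.getD (i - 1) 0 ∧ w.getD i 0 ≤ (i : ℤ) + 1)).length

/-- Number of crossing descents of a permutation. -/
def xdesNum {n : ℕ} (σ : Equiv.Perm (Fin n)) : ℕ := xdesW (oneLine σ)

/-- A height sequence `d` encodes a Dyck path: it is weakly increasing and `d_i ≤ i - 1`
(1-indexed), i.e. `d.getD i 0 ≤ i` (0-indexed). -/
def IsDyck (d : List ℕ) : Prop :=
  List.Pairwise (· ≤ ·) d ∧ ∀ i < d.length, d.getD i 0 ≤ i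

/-- Number of hills of a Dyck path: east steps of height equal to their index that
touch the diagonal and are immediately followed by a north step. -/
def hillNum (d : List ℕ) : ℕ :=
  ((List.range d.length).filter fun i => decide (d.getD i 0 = i ∧
    (i + 1 = d.length ∨ d.getD i 0 < d.getD (i + 1) 0))).length

/-- Number of segments of a Dyck path: maximal runs of at least two consecutive
equal heights (counted by their starting index). -/
def segNum (d : List ℕ) : ℕ :=
  ((List.range d.length).filter fun i => decide (i + 1 < d.length ∧
    d.getD i 0 = d.getD (i + 1) 0 ∧ (i = 0 ∨ d.getD (i - 1) 0 ≠ d.getD i 0))).length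

/-- `lseg`: the (1-indexed) position of the last step of the leftmost segment,
or `n+1` if there is no segment. -/
def lsegNum (d : List ℕ) : ℕ :=
  (((List.range (d.length + 2)).filter fun i =>
    decide ((2 ≤ i ∧ i ≤ d.length ∧ d.getD (i - 2) 0 = d.getD (i - 1) 0 ∧
      (i = d.length ∨ d.getD (i - 1) 0 ≠ d.getD i 0)) ∨ i = d.length + 1))).headD 0

/-- Dyck paths of semilength `n`, encoded as monotone functions `Fin n → Fin (n+1)`
bounded by the diagonal (their height sequences). -/
def DyckFinset (n : ℕ) : Finset (Fin n → Fin (n + 1)) :=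
  Finset.univ.filter fun f =>
    (∀ i j : Fin n, i ≤ j → f i ≤ f j) ∧ ∀ i : Fin n, (f i : ℕ) ≤ (i : ℕ)

/-- The height sequence of a function `Fin n → Fin (n+1)` as a list. -/
def hList {n : ℕ} (f : Fin n → Fin (n + 1)) : List ℕ :=
  (List.finRange n).map fun i => (f i : ℕ)


/-!
Only the colours of fixed points change, and the transpositions `(c c+1)` with `c + 2 < k`
generate the permutations of the first `k - 1` colours, so it suffices to exchange the numbers
of fixed points of colours `c` and `c + 1`. Let `s` be the set of their positions and read their
colours as a binary word `x` (`true` for `c`, whose letter `¬(c+1)` is the larger one). All other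
letters stay put and never lie between `¬(c+2)` and `¬(c+1)`, so `DES`, `DEZ` and `Der` are kept
as soon as the descents of `x` inside `s` are.

Cut `s` at these descents into blocks; on a block `x` reads `false^p true^q`. A Bender–Knuth
type involution rewrites it as `false^p' true^(p+q-p')` with `p' = q + A - B`, where `A` (resp.
`B`) is `1` if the block is preceded (followed) by a descent. This keeps a `true` before and a
`false` after every descent, hence all descents; and as the `A`'s and the `B`'s both add up to the
number of descents, it turns the number of `true`s into the number of `false`s.
-/

open Finset

section Blocks

-- `D j` separates `j` from `j + 1`: the blocks are the maximal intervals of `s` crossing no cut.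
variable (s : Finset ℕ) (D : ℕ → Prop)

def StartsBlock (L : ℕ) : Prop := ∀ j, j + 1 = L → j ∈ s → D j

noncomputable def blockStart (i : ℕ) : ℕ := Nat.findGreatest (StartsBlock s D) i

noncomputable def block (L : ℕ) : Finset ℕ := s.filter (blockStart s D · = L)

variable {s D} {j t u L : ℕ}

lemma mem_block : t ∈ block s D L ↔ t ∈ s ∧ blockStart s D t = L := mem_filter

lemma blockStart_le (t : ℕ) : blockStart s D t ≤ t := Nat.findGreatest_le t

lemma le_of_mem_block (ht : t ∈ block s D L) : L ≤ t := (mem_block.1 ht).2 ▸ blockStart_le t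

lemma blockStart_succ_of_not_cut (hj : j ∈ s) (hD : ¬ D j) :
    blockStart s D (j + 1) = blockStart s D j :=
  Nat.findGreatest_of_not fun h => hD (h j rfl hj)

lemma blockStart_succ_of_cut (hD : D j) : blockStart s D (j + 1) = j + 1 :=
  le_antisymm (blockStart_le _) <| Nat.le_findGreatest le_rfl fun j' hj' _ => by
    rwa [Nat.succ_injective hj']

lemma mem_block_of_le (ht : t ∈ block s D L) (hLu : L ≤ u) (hut : u ≤ t) :
    u ∈ block s D L := by
  induction t, hut using Nat.le_induction with
  | base => exact ht
  | succ t hut ih =>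
    obtain ⟨hts, hL⟩ := mem_block.1 ht
    have hcut : ¬ StartsBlock s D (t + 1) :=
      Nat.findGreatest_is_greatest (show blockStart s D (t + 1) < t + 1 by omega) le_rfl
    simp only [StartsBlock, not_forall] at hcut
    obtain ⟨j, hj, hjs, hD⟩ := hcut
    obtain rfl : j = t := by omega
    exact ih (mem_block.2 ⟨hjs, (blockStart_succ_of_not_cut hjs hD).symm.trans hL⟩)

lemma block_eq_Ico (L : ℕ) : block s D L = Ico L (L + #(block s D L)) := by
  refine eq_of_subset_of_card_le (fun t ht => ?_) (by simp)
  have hcard := card_le_card fun u hu => mem_block_of_le ht (mem_Icc.1 hu).1 (mem_Icc.1 hu).2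
  have := le_of_mem_block ht
  simp only [Nat.card_Icc] at hcard
  simp only [mem_Ico]
  omega

lemma succ_eq_of_mem_block (ht : t ∈ block s D L) (ht' : t + 1 ∉ block s D L) :
    t + 1 = L + #(block s D L) := by
  rw [block_eq_Ico] at ht ht'
  simp only [mem_Ico] at ht ht'
  omega

lemma card_filter_block_le (θ : ℕ) :
    #((block s D L).filter (L + θ ≤ ·)) = #(block s D L) - θ := by
  obtain ⟨N, hN⟩ : ∃ N, block s D L = Ico L (L + N) := ⟨_, block_eq_Ico L⟩
  rw [hN, Ico_filter_le, Nat.card_Ico, Nat.card_Ico]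
  omega

lemma card_filter_eq_sum_block (P : ℕ → Prop) [DecidablePred P] :
    #(s.filter P) = ∑ L ∈ s.image (blockStart s D), #((block s D L).filter P) := by
  rw [card_eq_sum_card_fiberwise (f := blockStart s D) fun t ht =>
    mem_image_of_mem _ (mem_filter.1 ht).1]
  simp only [block, filter_filter, and_comm]

end Blocks

lemma card_filter_true_add_card_filter_false (B : Finset ℕ) (x : ℕ → Bool) :
    #(B.filter (x · = true)) + #(B.filter (x · = false)) = #B := by
  simpa only [Bool.not_eq_true] using card_filter_add_card_filter_not (s := B) (x · = true)

section Flip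

variable (s : Finset ℕ) (x : ℕ → Bool)

def IsDescent (j : ℕ) : Prop := j ∈ s ∧ j + 1 ∈ s ∧ x j = true ∧ x (j + 1) = false

def FollowsDescent (t : ℕ) : Prop := ∃ j, IsDescent s x j ∧ j + 1 = t

-- The new number of `false`s of the block at `L`; the subtraction is exact, as descents are `true`.
noncomputable def flipCount (L : ℕ) : ℕ :=
  #((block s (IsDescent s x) L).filter (x · = true))
    + #((block s (IsDescent s x) L).filter (FollowsDescent s x))
    - #((block s (IsDescent s x) L).filter (IsDescent s x))

noncomputable def flipBlocks (i : ℕ) : Bool :=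
  if i ∈ s then
    decide (blockStart s (IsDescent s x) i + flipCount s x (blockStart s (IsDescent s x) i) ≤ i)
  else x i

variable {s x} {i j t t' L : ℕ}

lemma not_isDescent_of_succ_mem_block (ht : t + 1 ∈ block s (IsDescent s x) L) (hLt : L ≤ t) :
    ¬ IsDescent s x t := fun hD => by
  have hL := (mem_block.1 ht).2
  rw [blockStart_succ_of_cut hD] at hL
  omega

lemma eq_true_of_le_of_mem_block (ht : t ∈ block s (IsDescent s x) L)
    (ht' : t' ∈ block s (IsDescent s x) L) (htt' : t ≤ t') (hx : x t = true) : x t' = true := by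
  induction t', htt' using Nat.le_induction with
  | base => exact hx
  | succ t' htt' ih =>
    have hLt' := (le_of_mem_block ht).trans htt'
    have hprev := mem_block_of_le ht' hLt' (Nat.le_succ t')
    have hD := not_isDescent_of_succ_mem_block ht' hLt'
    simp only [IsDescent, not_and, Bool.not_eq_false] at hD
    exact hD (mem_block.1 hprev).1 (mem_block.1 ht').1 (ih hprev)

lemma eq_decide_of_mem_block (ht : t ∈ block s (IsDescent s x) L) :
    x t = decide (L + #((block s (IsDescent s x) L).filter (x · = false)) ≤ t) := by
  have := le_of_mem_block ht
  cases hxt : x t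
  · have hsub : Icc L t ⊆ (block s (IsDescent s x) L).filter (x · = false) := fun u hu => by
      obtain ⟨hLu, hut⟩ := mem_Icc.1 hu
      have hu' := mem_block_of_le ht hLu hut
      refine mem_filter.2 ⟨hu', Bool.eq_false_iff.2 fun hxu => ?_⟩
      simp [eq_true_of_le_of_mem_block hu' ht hut hxu] at hxt
    have := card_le_card hsub
    simp only [Nat.card_Icc] at this
    rw [eq_comm, decide_eq_false_iff_not]
    omega
  · have hsub : (block s (IsDescent s x) L).filter (x · = false) ⊆ Ico L t := fun u hu => by
      obtain ⟨hu', hxu⟩ := mem_filter.1 hu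
      refine mem_Ico.2 ⟨le_of_mem_block hu', not_le.1 fun htu => ?_⟩
      simp [eq_true_of_le_of_mem_block ht hu' htu hxt] at hxu
    have := card_le_card hsub
    simp only [Nat.card_Ico] at this
    rw [eq_comm, decide_eq_true_iff]
    omega

lemma card_followsDescent_le (L : ℕ) :
    #((block s (IsDescent s x) L).filter (FollowsDescent s x))
      ≤ #((block s (IsDescent s x) L).filter (x · = false)) :=
  card_le_card <| monotone_filter_right _ fun _ _ ⟨_, hD, hjt⟩ => hjt ▸ hD.2.2.2

lemma card_isDescent_le (L : ℕ) :
    #((block s (IsDescent s x) L).filter (IsDescent s x))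
      ≤ #((block s (IsDescent s x) L).filter (x · = true)) :=
  card_le_card <| monotone_filter_right _ fun _ _ hD => hD.2.2.1

lemma flipBlocks_of_not_mem (hi : i ∉ s) : flipBlocks s x i = x i := if_neg hi

lemma flipBlocks_of_mem_block (ht : t ∈ block s (IsDescent s x) L) :
    flipBlocks s x t = decide (L + flipCount s x L ≤ t) := by
  obtain ⟨hts, rfl⟩ := mem_block.1 ht
  exact if_pos hts

lemma card_filter_flipBlocks (L : ℕ) :
    #((block s (IsDescent s x) L).filter (flipBlocks s x · = true))
      = #(block s (IsDescent s x) L) - flipCount s x L := by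
  rw [← card_filter_block_le]
  congr 1
  exact filter_congr fun t ht => by rw [flipBlocks_of_mem_block ht, decide_eq_true_iff]

lemma flipBlocks_eq_true_of_isDescent (hD : IsDescent s x j) : flipBlocks s x j = true := by
  obtain ⟨L, hL⟩ : ∃ L, blockStart s (IsDescent s x) j = L := ⟨_, rfl⟩
  have hjB : j ∈ block s (IsDescent s x) L := mem_block.2 ⟨hD.1, hL⟩
  have hend := succ_eq_of_mem_block hjB fun h => by
    have := (mem_block.1 h).2
    rw [blockStart_succ_of_cut hD] at this
    have := le_of_mem_block hjB
    omega
  have hB : 0 < #((block s (IsDescent s x) L).filter (IsDescent s x)) :=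
    card_pos.2 ⟨j, mem_filter.2 ⟨hjB, hD⟩⟩
  have := card_filter_true_add_card_filter_false (block s (IsDescent s x) L) x
  have := card_followsDescent_le (s := s) (x := x) L
  have := card_isDescent_le (s := s) (x := x) L
  rw [flipBlocks_of_mem_block hjB, decide_eq_true_iff, flipCount]
  omega

lemma flipBlocks_succ_eq_false_of_isDescent (hD : IsDescent s x j) :
    flipBlocks s x (j + 1) = false := by
  have hjB : j + 1 ∈ block s (IsDescent s x) (j + 1) :=
    mem_block.2 ⟨hD.2.1, blockStart_succ_of_cut hD⟩
  have hA : 0 < #((block s (IsDescent s x) (j + 1)).filter (FollowsDescent s x)) :=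
    card_pos.2 ⟨j + 1, mem_filter.2 ⟨hjB, j, hD, rfl⟩⟩
  have := card_isDescent_le (s := s) (x := x) (j + 1)
  rw [flipBlocks_of_mem_block hjB, decide_eq_false_iff_not, flipCount]
  omega

lemma isDescent_flipBlocks_iff : IsDescent s (flipBlocks s x) j ↔ IsDescent s x j := by
  by_cases hD : IsDescent s x j
  · exact iff_of_true ⟨hD.1, hD.2.1, flipBlocks_eq_true_of_isDescent hD,
      flipBlocks_succ_eq_false_of_isDescent hD⟩ hD
  refine iff_of_false (fun ⟨hj, hj₁, htop, hbot⟩ => ?_) hD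
  have hjB : j ∈ block s (IsDescent s x) (blockStart s (IsDescent s x) j) :=
    mem_block.2 ⟨hj, rfl⟩
  have hj₁B : j + 1 ∈ block s (IsDescent s x) (blockStart s (IsDescent s x) j) :=
    mem_block.2 ⟨hj₁, blockStart_succ_of_not_cut hj hD⟩
  rw [flipBlocks_of_mem_block hjB, decide_eq_true_iff] at htop
  rw [flipBlocks_of_mem_block hj₁B, decide_eq_false_iff_not] at hbot
  omega

lemma isDescent_flipBlocks : IsDescent s (flipBlocks s x) = IsDescent s x :=
  funext fun _ => propext isDescent_flipBlocks_iff

lemma flipCount_flipBlocks (L : ℕ) :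
    flipCount s (flipBlocks s x) L = #((block s (IsDescent s x) L).filter (x · = false)) := by
  have := card_filter_flipBlocks (s := s) (x := x) L
  have := card_filter_true_add_card_filter_false (block s (IsDescent s x) L) x
  have := card_followsDescent_le (s := s) (x := x) L
  have := card_isDescent_le (s := s) (x := x) L
  unfold flipCount FollowsDescent at *
  rw [isDescent_flipBlocks]
  omega

lemma flipBlocks_flipBlocks : flipBlocks s (flipBlocks s x) = x := by
  funext i
  by_cases hi : i ∈ s
  · have hiB : i ∈ block s (IsDescent s x) (blockStart s (IsDescent s x) i) :=
      mem_block.2 ⟨hi, rfl⟩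
    have hiB' : i ∈ block s (IsDescent s (flipBlocks s x)) (blockStart s (IsDescent s x) i) := by
      rwa [isDescent_flipBlocks]
    rw [flipBlocks_of_mem_block hiB', flipCount_flipBlocks, eq_decide_of_mem_block hiB]
  · rw [flipBlocks_of_not_mem hi, flipBlocks_of_not_mem hi]

lemma card_filter_followsDescent :
    #(s.filter (FollowsDescent s x)) = #(s.filter (IsDescent s x)) := by
  rw [← card_image_of_injective (s.filter (IsDescent s x)) (add_left_injective 1)]
  congr 1
  ext t
  simp only [mem_filter, mem_image, FollowsDescent]
  exact ⟨fun ⟨_, j, hD, hjt⟩ => ⟨j, ⟨hD.1, hD⟩, hjt⟩,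
    fun ⟨j, ⟨_, hD⟩, hjt⟩ => ⟨hjt ▸ hD.2.1, j, hD, hjt⟩⟩

lemma card_filter_flipBlocks_true :
    #(s.filter (flipBlocks s x · = true)) = #(s.filter (x · = false)) := by
  have hblock (L : ℕ) :
      #((block s (IsDescent s x) L).filter (flipBlocks s x · = true))
        + #((block s (IsDescent s x) L).filter (FollowsDescent s x))
      = #((block s (IsDescent s x) L).filter (x · = false))
        + #((block s (IsDescent s x) L).filter (IsDescent s x)) := by
    have := card_filter_true_add_card_filter_false (block s (IsDescent s x) L) x
    have := card_followsDescent_le (s := s) (x := x) L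
    have := card_isDescent_le (s := s) (x := x) L
    rw [card_filter_flipBlocks, flipCount]
    omega
  have hsum := sum_congr rfl fun L (_ : L ∈ s.image (blockStart s (IsDescent s x))) => hblock L
  simp only [sum_add_distrib, ← card_filter_eq_sum_block] at hsum
  rw [card_filter_followsDescent] at hsum
  omega

-- No integer lies strictly between `lo` and `hi`, so a letter outside `s` compares alike with both.
lemma lt_iff_of_recolor {y : ℕ → Bool} {f f' : ℕ → ℤ} {lo hi : ℤ} (hv : hi = lo + 1)
    (hin : ∀ j ∈ s, f j = (if x j then hi else lo) ∧ f' j = if y j then hi else lo)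
    (hout : ∀ j ∉ s, f' j = f j ∧ f j ≠ lo ∧ f j ≠ hi)
    (hdesc : IsDescent s y j ↔ IsDescent s x j) :
    f' (j + 1) < f' j ↔ f (j + 1) < f j := by
  by_cases h₀ : j ∈ s <;> by_cases h₁ : j + 1 ∈ s
  · obtain ⟨e₀, e₀'⟩ := hin j h₀
    obtain ⟨e₁, e₁'⟩ := hin (j + 1) h₁
    simp only [IsDescent, h₀, h₁, true_and] at hdesc
    rw [e₀, e₀', e₁, e₁']
    revert hdesc
    cases x j <;> cases x (j + 1) <;> cases y j <;> cases y (j + 1) <;> simp <;> omega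
  · obtain ⟨e₀, e₀'⟩ := hin j h₀
    obtain ⟨e₁, e₁', _⟩ := hout (j + 1) h₁
    rw [e₀, e₀', e₁]
    split_ifs <;> omega
  · obtain ⟨e₀, e₀', _⟩ := hout j h₀
    obtain ⟨e₁, e₁'⟩ := hin (j + 1) h₁
    rw [e₀, e₁, e₁']
    split_ifs <;> omega
  · rw [(hout j h₀).1, (hout (j + 1) h₁).1]

end Flip

section Words

lemma getD_mem_of_lt {w : List ℤ} {i : ℕ} (hi : i < w.length) : w.getD i 0 ∈ w := by
  rw [List.getD_eq_getElem _ _ hi]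
  exact List.getElem_mem hi

lemma getD_map_of_lt {w : List ℤ} {f : ℤ → ℤ} {i : ℕ} (hi : i < w.length) :
    (w.map f).getD i 0 = f (w.getD i 0) := by
  simp [hi]

lemma getD_map_finRange {n : ℕ} (g : Fin n → ℤ) {j : ℕ} (hj : j < n) :
    ((List.finRange n).map g).getD j 0 = g ⟨j, hj⟩ := by
  rw [List.getD_eq_getElem _ _ (by simpa using hj)]
  simp

lemma desSet_map_of_strictMonoOn (w : List ℤ) {f : ℤ → ℤ} (hf : StrictMonoOn f {y | y ∈ w}) :
    desSet (w.map f) = desSet w := by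
  unfold desSet
  rw [List.length_map]
  refine filter_congr fun i hi => and_congr_right fun _ => ?_
  have hi := mem_range.1 hi
  rw [getD_map_of_lt hi, getD_map_of_lt (by omega)]
  exact hf.lt_iff_lt (getD_mem_of_lt hi) (getD_mem_of_lt (by omega))

lemma desSet_eq_of_lt_iff {w w' : List ℤ} (hlen : w'.length = w.length)
    (h : ∀ j, j + 1 < w.length →
      (w'.getD (j + 1) 0 < w'.getD j 0 ↔ w.getD (j + 1) 0 < w.getD j 0)) :
    desSet w' = desSet w := by
  unfold desSet
  rw [hlen]
  refine filter_congr fun i hi => and_congr_right fun h₁ => ?_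
  obtain ⟨j, rfl⟩ : ∃ j, i = j + 1 := ⟨i - 1, by omega⟩
  exact h j (mem_range.1 hi)

noncomputable def posRank (w : List ℤ) (y : ℤ) : ℤ :=
  if 0 < y then (#(w.toFinset.filter fun z => 0 < z ∧ z ≤ y) : ℤ) else y

lemma posReduce_eq_map (w : List ℤ) : posReduce w = w.map (posRank w) := rfl

lemma one_le_posRank {w : List ℤ} {y : ℤ} (hy : y ∈ w) (hpos : 0 < y) : 1 ≤ posRank w y := by
  rw [posRank, if_pos hpos, Nat.one_le_cast, Nat.one_le_iff_ne_zero, ← pos_iff_ne_zero, card_pos]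
  exact ⟨y, by simp [hy, hpos]⟩

lemma strictMonoOn_posRank (w : List ℤ) : StrictMonoOn (posRank w) {y | y ∈ w} := by
  intro y (hy : y ∈ w) z (hz : z ∈ w) hyz
  by_cases hz₀ : 0 < z
  · by_cases hy₀ : 0 < y
    · rw [posRank, posRank, if_pos hy₀, if_pos hz₀, Nat.cast_lt]
      refine card_lt_card ⟨monotone_filter_right _ fun u _ hu => ⟨hu.1, hu.2.trans hyz.le⟩,
        fun hsub => ?_⟩
      have := (mem_filter.1 (hsub (mem_filter.2 ⟨List.mem_toFinset.2 hz, hz₀, le_rfl⟩))).2.2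
      omega
    · have := one_le_posRank hz hz₀
      rw [posRank, if_neg hy₀]
      omega
  · rw [posRank, posRank, if_neg hz₀, if_neg (by omega)]
    exact hyz

lemma desSet_posReduce (w : List ℤ) : desSet (posReduce w) = desSet w :=
  desSet_map_of_strictMonoOn w (strictMonoOn_posRank w)

lemma posPart_posReduce (w : List ℤ) : posPart (posReduce w) = posReduce (posPart w) := by
  rw [posReduce_eq_map, posReduce_eq_map, posPart, List.filter_map]
  have hfilter : w.filter ((fun y => decide (0 < y)) ∘ posRank w) = posPart w := by
    refine List.filter_congr fun y hy => ?_
    by_cases hy₀ : 0 < y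
    · have := one_le_posRank hy hy₀
      simp only [Function.comp, hy₀, decide_true, decide_eq_true_eq]
      omega
    · simp [posRank, hy₀]
  rw [hfilter]
  refine List.map_congr_left fun y hy => ?_
  have hy₀ : 0 < y := by simpa [posPart] using (List.mem_filter.1 hy).2
  simp only [posRank, if_pos hy₀, posPart]
  congr 2
  ext z
  simp only [mem_filter, List.mem_toFinset, List.mem_filter, decide_eq_true_eq]
  tauto

lemma posPart_map_congr {α : Type*} (l : List α) {g g' : α → ℤ}
    (h : ∀ a ∈ l, 0 < g a ∨ 0 < g' a → g' a = g a) :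
    posPart (l.map g') = posPart (l.map g) := by
  induction l with
  | nil => rfl
  | cons a l ih =>
    simp only [List.map_cons, posPart, List.filter_cons] at ih ⊢
    rw [ih fun b hb => h b (List.mem_cons_of_mem a hb)]
    by_cases ha : 0 < g a ∨ 0 < g' a
    · rw [h a List.mem_cons_self ha]
    · simp only [not_or, not_lt] at ha
      simp [not_lt.2 ha.1, not_lt.2 ha.2]

end Words

section Recolor

variable {n k : ℕ}

def InPair (a : Arrangement n k) (c : ℕ) (i : Fin n) : Prop :=
  a.1.1 i = i ∧ ((a.1.2 i : ℕ) = c ∨ (a.1.2 i : ℕ) = c + 1)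

noncomputable def pairSet (a : Arrangement n k) (c : ℕ) : Finset ℕ :=
  (univ.filter (InPair a c)).map Fin.valEmbedding

-- `true` for colour `c`, whose letter `¬(c+1)` exceeds the letter `¬(c+2)` of colour `c + 1`.
def pairBit (a : Arrangement n k) (c j : ℕ) : Bool :=
  if h : j < n then decide ((a.1.2 ⟨j, h⟩ : ℕ) = c) else false

noncomputable def recolor (a : Arrangement n k) (c : ℕ) (hc : c + 1 < k) (y : ℕ → Bool) :
    Arrangement n k :=
  ⟨(a.1.1, fun i => if InPair a c i then (if y i then ⟨c, by omega⟩ else ⟨c + 1, hc⟩)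
      else a.1.2 i),
    fun j hj => by simpa only [InPair, hj, false_and, if_false] using a.2 j hj⟩

noncomputable def swapColors (c : ℕ) (hc : c + 1 < k) (a : Arrangement n k) : Arrangement n k :=
  recolor a c hc (flipBlocks (pairSet a c) (pairBit a c))

variable {a : Arrangement n k} {c : ℕ} {hc : c + 1 < k} {y : ℕ → Bool} {i : Fin n} {j : ℕ}

lemma coe_mem_pairSet : (i : ℕ) ∈ pairSet a c ↔ InPair a c i := by
  simp [pairSet, Fin.val_inj]

lemma lt_of_mem_pairSet (hj : j ∈ pairSet a c) : j < n := by
  obtain ⟨i, -, rfl⟩ := mem_map.1 hj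
  exact i.isLt

lemma pairBit_coe : pairBit a c i = decide ((a.1.2 i : ℕ) = c) := by
  simp [pairBit]

lemma recolor_fst : (recolor a c hc y).1.1 = a.1.1 := rfl

lemma recolor_snd_of_inPair (h : InPair a c i) :
    ((recolor a c hc y).1.2 i : ℕ) = if y i then c else c + 1 := by
  simp only [recolor, if_pos h]
  split_ifs <;> rfl

lemma recolor_snd_of_not_inPair (h : ¬ InPair a c i) : (recolor a c hc y).1.2 i = a.1.2 i :=
  if_neg h

lemma inPair_recolor : InPair (recolor a c hc y) c i ↔ InPair a c i := by
  by_cases h : InPair a c i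
  · refine iff_of_true ⟨h.1, ?_⟩ h
    rw [recolor_snd_of_inPair h]
    split_ifs <;> simp
  · rw [InPair, recolor_fst, recolor_snd_of_not_inPair h]
    rfl

lemma pairSet_recolor : pairSet (recolor a c hc y) c = pairSet a c := by
  simp only [pairSet, inPair_recolor]

lemma pairBit_recolor (hy : ∀ j ∉ pairSet a c, y j = pairBit a c j) :
    pairBit (recolor a c hc y) c = y := by
  funext j
  by_cases hj : j < n
  · lift j to Fin n using hj
    by_cases h : InPair a c j
    · rw [pairBit_coe, recolor_snd_of_inPair h]
      split_ifs <;> simp_all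
    · rw [pairBit_coe, recolor_snd_of_not_inPair h, hy j (coe_mem_pairSet.not.2 h), pairBit_coe]
  · rw [hy j fun h => hj (lt_of_mem_pairSet h)]
    simp [pairBit, hj]

lemma recolor_recolor {z : ℕ → Bool} : recolor (recolor a c hc y) c hc z = recolor a c hc z := by
  refine Subtype.ext (Prod.ext rfl (funext fun i => ?_))
  show (recolor (recolor a c hc y) c hc z).1.2 i = (recolor a c hc z).1.2 i
  by_cases h : InPair a c i
  · exact Fin.ext (by rw [recolor_snd_of_inPair (inPair_recolor.2 h), recolor_snd_of_inPair h])
  · rw [recolor_snd_of_not_inPair (inPair_recolor.not.2 h), recolor_snd_of_not_inPair h,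
      recolor_snd_of_not_inPair h]

lemma recolor_pairBit : recolor a c hc (pairBit a c) = a := by
  refine Subtype.ext (Prod.ext rfl (funext fun i => ?_))
  by_cases h : InPair a c i
  · refine Fin.ext ?_
    rw [recolor_snd_of_inPair h, pairBit_coe]
    rcases h.2 with h' | h' <;> simp [h']
  · exact recolor_snd_of_not_inPair h

lemma pairBit_swapColors :
    pairBit (swapColors c hc a) c = flipBlocks (pairSet a c) (pairBit a c) :=
  pairBit_recolor fun _ hj => flipBlocks_of_not_mem hj

lemma swapColors_swapColors : swapColors c hc (swapColors c hc a) = a := by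
  rw [swapColors, pairBit_swapColors, swapColors, pairSet_recolor, recolor_recolor,
    flipBlocks_flipBlocks, recolor_pairBit]

end Recolor

section SwapColors

variable {n k : ℕ} {a : Arrangement n k} {c : ℕ} {hc : c + 1 < k} {y : ℕ → Bool} {i : Fin n}

lemma fixCount_eq_card (a : Arrangement n k) (c' : Fin k) :
    fixCount a c' = #(univ.filter fun i => a.1.1 i = i ∧ a.1.2 i = c') := by
  rw [fixCount, Nat.card_eq_fintype_card, Fintype.card_subtype]

lemma card_filter_pairSet (P : ℕ → Prop) [DecidablePred P] :
    #((pairSet a c).filter P) = #(univ.filter fun i : Fin n => InPair a c i ∧ P i) := by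
  rw [pairSet, filter_map, card_map, filter_filter]
  rfl

lemma fixCount_eq_card_pairBit_true (hc : c < k) :
    fixCount a ⟨c, hc⟩ = #((pairSet a c).filter (pairBit a c · = true)) := by
  rw [fixCount_eq_card, card_filter_pairSet]
  refine congrArg card (filter_congr fun i _ => ?_)
  simp only [InPair, pairBit_coe, decide_eq_true_eq, Fin.ext_iff]
  omega

lemma fixCount_eq_card_pairBit_false (hc : c + 1 < k) :
    fixCount a ⟨c + 1, hc⟩ = #((pairSet a c).filter (pairBit a c · = false)) := by
  rw [fixCount_eq_card, card_filter_pairSet]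
  refine congrArg card (filter_congr fun i _ => ?_)
  simp only [InPair, pairBit_coe, decide_eq_false_iff_not, Fin.ext_iff]
  omega

lemma fixCount_recolor_of_ne (c' : Fin k) (h₁ : (c' : ℕ) ≠ c) (h₂ : (c' : ℕ) ≠ c + 1) :
    fixCount (recolor a c hc y) c' = fixCount a c' := by
  rw [fixCount_eq_card, fixCount_eq_card]
  refine congrArg card (filter_congr fun i _ => ?_)
  by_cases h : InPair a c i
  · have hcol := recolor_snd_of_inPair (hc := hc) (y := y) h
    refine iff_of_false (fun h' => ?_) (fun h' => ?_)
    · rw [h'.2] at hcol; split_ifs at hcol <;> omega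
    · rcases h.2 with h'' | h'' <;> rw [h'.2] at h'' <;> omega
  · rw [recolor_fst, recolor_snd_of_not_inPair h]

lemma fixCount_swapColors_left :
    fixCount (swapColors c hc a) ⟨c, by omega⟩ = fixCount a ⟨c + 1, hc⟩ := by
  rw [fixCount_eq_card_pairBit_true, fixCount_eq_card_pairBit_false, swapColors, pairSet_recolor,
    ← swapColors, pairBit_swapColors, card_filter_flipBlocks_true]

lemma fixCount_swapColors (c' : Fin k) :
    fixCount (swapColors c hc a) c' = fixCount a (Equiv.swap ⟨c, by omega⟩ ⟨c + 1, hc⟩ c') := by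
  by_cases h₁ : (c' : ℕ) = c
  · rw [show c' = ⟨c, by omega⟩ from Fin.ext h₁, Equiv.swap_apply_left,
      fixCount_swapColors_left]
  by_cases h₂ : (c' : ℕ) = c + 1
  · rw [show c' = ⟨c + 1, hc⟩ from Fin.ext h₂, Equiv.swap_apply_right,
      ← fixCount_swapColors_left, swapColors_swapColors]
  rw [Equiv.swap_apply_of_ne_of_ne (fun h => h₁ (by simp [h])) (fun h => h₂ (by simp [h])),
    swapColors, fixCount_recolor_of_ne c' h₁ h₂]

def dfLetter (a : Arrangement n k) (i : Fin n) : ℤ :=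
  if a.1.1 i = i then -(((a.1.2 i : ℕ) : ℤ) + 1) else ((a.1.1 i : ℕ) : ℤ) + 1

def pfLetter (a : Arrangement n k) (i : Fin n) : ℤ :=
  if a.1.1 i = i ∧ (a.1.2 i : ℕ) + 1 ≠ k then -(((a.1.2 i : ℕ) : ℤ) + 1)
  else ((a.1.1 i : ℕ) : ℤ) + 1

lemma dfWord_eq (a : Arrangement n k) :
    dfWord a = posReduce ((List.finRange n).map (dfLetter a)) := rfl

lemma pfWord_eq (a : Arrangement n k) :
    pfWord a = posReduce ((List.finRange n).map (pfLetter a)) := rfl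

lemma dfLetter_of_inPair (h : InPair a c i) :
    dfLetter a i = if pairBit a c i then -(c : ℤ) - 1 else -(c : ℤ) - 2 := by
  rcases h with ⟨hfix, hcol | hcol⟩ <;> simp [dfLetter, hfix, hcol, pairBit_coe] <;> omega

lemma pfLetter_of_inPair (hc₂ : c + 2 < k) (h : InPair a c i) :
    pfLetter a i = if pairBit a c i then -(c : ℤ) - 1 else -(c : ℤ) - 2 := by
  rcases h with ⟨hfix, hcol | hcol⟩ <;> simp [pfLetter, hfix, hcol, pairBit_coe] <;> omega

lemma dfLetter_recolor_of_not_inPair (h : ¬ InPair a c i) :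
    dfLetter (recolor a c hc y) i = dfLetter a i ∧
      dfLetter a i ≠ -(c : ℤ) - 2 ∧ dfLetter a i ≠ -(c : ℤ) - 1 := by
  refine ⟨by simp only [dfLetter, recolor_fst, recolor_snd_of_not_inPair h], ?_⟩
  simp only [InPair, not_and, not_or] at h
  unfold dfLetter
  split_ifs with hfix
  · have := h hfix; constructor <;> omega
  · constructor <;> omega

lemma pfLetter_recolor_of_not_inPair (h : ¬ InPair a c i) :
    pfLetter (recolor a c hc y) i = pfLetter a i ∧
      pfLetter a i ≠ -(c : ℤ) - 2 ∧ pfLetter a i ≠ -(c : ℤ) - 1 := by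
  refine ⟨by simp only [pfLetter, recolor_fst, recolor_snd_of_not_inPair h], ?_⟩
  simp only [InPair, not_and, not_or] at h
  unfold pfLetter
  split_ifs with hfix
  · have := h hfix.1; constructor <;> omega
  · constructor <;> omega

lemma desSet_map_swapColors {ℓ : Arrangement n k → Fin n → ℤ}
    (hin : ∀ (a : Arrangement n k) i, InPair a c i →
      ℓ a i = if pairBit a c i then -(c : ℤ) - 1 else -(c : ℤ) - 2)
    (hout : ∀ (a : Arrangement n k) y i, ¬ InPair a c i →
      ℓ (recolor a c hc y) i = ℓ a i ∧ ℓ a i ≠ -(c : ℤ) - 2 ∧ ℓ a i ≠ -(c : ℤ) - 1)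
    (a : Arrangement n k) :
    desSet ((List.finRange n).map (ℓ (swapColors c hc a)))
      = desSet ((List.finRange n).map (ℓ a)) := by
  refine desSet_eq_of_lt_iff (by simp) fun j _ =>
    lt_iff_of_recolor (s := pairSet a c) (x := pairBit a c)
      (f := fun j => ((List.finRange n).map (ℓ a)).getD j 0)
      (f' := fun j => ((List.finRange n).map (ℓ (swapColors c hc a))).getD j 0)
      (lo := -(c : ℤ) - 2) (hi := -(c : ℤ) - 1) (by ring) (fun j hj => ?_) (fun j hj => ?_)
      isDescent_flipBlocks_iff
  · have hjn := lt_of_mem_pairSet hj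
    have hP : InPair a c ⟨j, hjn⟩ := coe_mem_pairSet.1 hj
    rw [getD_map_finRange _ hjn, getD_map_finRange _ hjn, hin _ _ hP,
      hin (swapColors c hc a) _ (inPair_recolor.2 hP), pairBit_swapColors]
    exact ⟨rfl, rfl⟩
  · by_cases hjn : j < n
    · rw [getD_map_finRange _ hjn, getD_map_finRange _ hjn]
      exact hout a _ _ fun h => hj (coe_mem_pairSet.2 h)
    · rw [List.getD_eq_default _ _ (by simpa using hjn),
        List.getD_eq_default _ _ (by simpa using hjn)]
      omega

lemma DEZset_swapColors : DEZset (swapColors c hc a) = DEZset a := by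
  rw [DEZset, DEZset, dfWord_eq, dfWord_eq, desSet_posReduce, desSet_posReduce]
  exact desSet_map_swapColors (fun _ _ => dfLetter_of_inPair)
    (fun _ _ _ => dfLetter_recolor_of_not_inPair) a

lemma DESset_swapColors (hc₂ : c + 2 < k) : DESset (swapColors c hc a) = DESset a := by
  rw [DESset, DESset, pfWord_eq, pfWord_eq, desSet_posReduce, desSet_posReduce]
  exact desSet_map_swapColors (fun _ _ => pfLetter_of_inPair hc₂)
    (fun _ _ _ => pfLetter_recolor_of_not_inPair) a

lemma Der_swapColors : Der (swapColors c hc a) = Der a := by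
  rw [Der, Der, dfWord_eq, dfWord_eq, posPart_posReduce, posPart_posReduce, posPart_map_congr]
  intro i _ hpos
  by_cases h : InPair a c i
  · rw [dfLetter_of_inPair h,
      dfLetter_of_inPair (a := swapColors c hc a) (inPair_recolor.2 h)] at hpos
    split_ifs at hpos <;> omega
  · exact (dfLetter_recolor_of_not_inPair h).1

end SwapColors

section Assembly

variable (n : ℕ) {k : ℕ}

def StatEquivalent (m m' : Fin k → ℕ) : Prop :=
  ∃ Ψ : {a : Arrangement n k // ∀ c, fixCount a c = m c} ≃
      {b : Arrangement n k // ∀ c, fixCount b c = m' c},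
    ∀ a, DESset a.1 = DESset (Ψ a).1 ∧ DEZset a.1 = DEZset (Ψ a).1 ∧ Der a.1 = Der (Ψ a).1

variable {n}

lemma StatEquivalent.refl (m : Fin k → ℕ) : StatEquivalent n m m :=
  ⟨Equiv.refl _, fun _ => ⟨rfl, rfl, rfl⟩⟩

lemma StatEquivalent.trans {m₁ m₂ m₃ : Fin k → ℕ} (h₁₂ : StatEquivalent n m₁ m₂)
    (h₂₃ : StatEquivalent n m₂ m₃) : StatEquivalent n m₁ m₃ := by
  obtain ⟨Ψ₁, h₁⟩ := h₁₂
  obtain ⟨Ψ₂, h₂⟩ := h₂₃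
  exact ⟨Ψ₁.trans Ψ₂, fun a => ⟨(h₁ a).1.trans (h₂ _).1, (h₁ a).2.1.trans (h₂ _).2.1,
    (h₁ a).2.2.trans (h₂ _).2.2⟩⟩

lemma statEquivalent_comp_swap (c : ℕ) (hc : c + 2 < k) (m : Fin k → ℕ) :
    StatEquivalent n m (m ∘ Equiv.swap ⟨c, by omega⟩ ⟨c + 1, by omega⟩) := by
  have hc₁ : c + 1 < k := by omega
  have hinv : Function.Involutive (swapColors (n := n) c hc₁) := fun _ => swapColors_swapColors
  refine ⟨hinv.toPerm.subtypeEquiv fun a => ?_, fun a =>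
    ⟨(DESset_swapColors hc).symm, DEZset_swapColors.symm, Der_swapColors.symm⟩⟩
  simp only [Function.Involutive.coe_toPerm, fixCount_swapColors, Function.comp_apply]
  exact (Equiv.swap _ _).forall_congr_right.symm

noncomputable def liftPerm (τ : Equiv.Perm (Fin (k - 1))) : Equiv.Perm (Fin k) :=
  Equiv.Perm.viaEmbeddingHom (Fin.castLEEmb (Nat.sub_le k 1)) τ

lemma liftPerm_apply (τ : Equiv.Perm (Fin (k - 1))) (c : Fin k) :
    liftPerm τ c =
      if h : (c : ℕ) < k - 1 then Fin.castLE (Nat.sub_le k 1) (τ ⟨c, h⟩) else c := by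
  split_ifs with h
  · exact Equiv.Perm.viaEmbedding_apply τ (Fin.castLEEmb _) ⟨c, h⟩
  · refine Equiv.Perm.viaEmbedding_apply_of_notMem _ _ _ ?_
    rintro ⟨c', rfl⟩
    exact h c'.isLt

lemma liftPerm_swap (i j : Fin (k - 1)) :
    liftPerm (Equiv.swap i j) =
      Equiv.swap (Fin.castLE (Nat.sub_le k 1) i) (Fin.castLE (Nat.sub_le k 1) j) := by
  refine Equiv.ext fun c => ?_
  rw [liftPerm_apply]
  split_ifs with h
  · exact ((Fin.castLEEmb (Nat.sub_le k 1)).swap_apply i j ⟨c, h⟩).symm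
  · refine (Equiv.swap_apply_of_ne_of_ne ?_ ?_).symm <;> intro hc <;> simp [hc] at h

lemma comp_liftPerm (m : Fin k → ℕ) (τ : Equiv.Perm (Fin (k - 1))) :
    m ∘ liftPerm τ =
      fun c : Fin k =>
        if h : (c : ℕ) < k - 1 then m (Fin.castLE (Nat.sub_le k 1) (τ ⟨c, h⟩)) else m c := by
  funext c
  rw [Function.comp_apply, liftPerm_apply]
  split_ifs <;> rfl

lemma mem_closure_adjacent_swaps {M : ℕ} (τ : Equiv.Perm (Fin M)) :
    τ ∈ Submonoid.closure {σ | ∃ i j : Fin M, (j : ℕ) = i + 1 ∧ σ = Equiv.swap i j} := by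
  cases M with
  | zero => exact Subsingleton.elim 1 τ ▸ Submonoid.one_mem _
  | succ M =>
    refine Submonoid.closure_mono ?_
      (Equiv.Perm.mclosure_swap_castSucc_succ M ▸ Submonoid.mem_top τ)
    rintro _ ⟨i, rfl⟩
    exact ⟨i.castSucc, i.succ, rfl, rfl⟩

lemma statEquivalent_comp_liftPerm (τ : Equiv.Perm (Fin (k - 1))) (m : Fin k → ℕ) :
    StatEquivalent n m (m ∘ liftPerm τ) := by
  induction mem_closure_adjacent_swaps τ using Submonoid.closure_induction generalizing m with
  | one =>
    rw [liftPerm, map_one, Equiv.Perm.coe_one, Function.comp_id]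
    exact StatEquivalent.refl m
  | mem σ hσ =>
    obtain ⟨i, j, hij, rfl⟩ := hσ
    rw [liftPerm_swap, show Fin.castLE (Nat.sub_le k 1) j = ⟨i + 1, by omega⟩ from Fin.ext hij]
    exact statEquivalent_comp_swap i (by omega) m
  | mul σ σ' _ _ ih ih' =>
    rw [liftPerm, map_mul, Equiv.Perm.coe_mul, ← Function.comp_assoc]
    exact (ih m).trans (ih' _)

end Assembly

theorem stmt7_general (n k : ℕ) (m : Fin k → ℕ)
    (τ : Equiv.Perm (Fin (k - 1))) :
    ∃ Ψ : {a : Arrangement n k // ∀ c, fixCount a c = m c} ≃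
          {b : Arrangement n k // ∀ c : Fin k, fixCount b c =
            if h : (c : ℕ) < k - 1 then
              m ⟨((τ ⟨(c : ℕ), h⟩ : Fin (k - 1)) : ℕ),
                 (τ ⟨(c : ℕ), h⟩).isLt.trans_le (Nat.sub_le k 1)⟩
            else m c},
      ∀ a, DESset a.1 = DESset (Ψ a).1 ∧ DEZset a.1 = DEZset (Ψ a).1 ∧
        Der a.1 = Der (Ψ a).1 := by
  have h := statEquivalent_comp_liftPerm (n := n) τ m
  rw [comp_liftPerm] at h
  exact h

theorem stmt7 (n k : ℕ) (hn : 1 ≤ n) (hk : 1 ≤ k) (m : Fin k → ℕ)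
    (τ : Equiv.Perm (Fin (k - 1))) :
    ∃ Ψ : {a : Arrangement n k // ∀ c, fixCount a c = m c} ≃
          {b : Arrangement n k // ∀ c : Fin k, fixCount b c =
            if h : (c : ℕ) < k - 1 then
              m ⟨((τ ⟨(c : ℕ), h⟩ : Fin (k - 1)) : ℕ),
                 (τ ⟨(c : ℕ), h⟩).isLt.trans_le (Nat.sub_le k 1)⟩
            else m c},
      ∀ a, DESset a.1 = DESset (Ψ a).1 ∧ DEZset a.1 = DEZset (Ψ a).1 ∧
        Der a.1 = Der (Ψ a).1 :=
  stmt7_general n k m τ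

end KArr
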